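/- arXiv:1801.01382 — 2 statements merged into one kernel-verified Lean document; each statement's English description precedes it below -/
import Mathlib

section
/- Local Lipschitz-type estimate for B: let B(s) = s²log(s²) + A(s) where A(s) = -s²log(s²) for 0 ≤ s ≤ e^{-3} and A(s) = 3s² + 4e^{-3}s - e^{-6} for s ≥ e^{-3}. Then for every ε > 0 there exists C_ε > 0 such that |B(|z|) - B(|w|)| ≤ C_ε(|z|^{1+ε} + |w|^{1+ε})|z - w| for all z, w ∈ ℂ. -/
/-!
`B` vanishes on `[0, e⁻³]` and equals `2s² log s + 3s² + 4e⁻³s - e⁻⁶` beyond, where its derivative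
`4s log s + 8s + 4e⁻³` vanishes at `s = e⁻³`; so `B` is `C¹`. Since `-3 ≤ log s ≤ s^ε / ε` and
`s ≤ e^{3ε} s^{1+ε}` for `s ≥ e⁻³`, we get `|B'(s)| ≤ C_ε s^{1+ε}`. The mean value theorem on the
segment between `|z|` and `|w|`, together with `||z| - |w|| ≤ |z - w|`, gives the estimate.
-/

open MeasureTheory

/-- The function `A` from the decomposition of the logarithmic nonlinearity. -/
noncomputable def Afun (s : ℝ) : ℝ :=
  if s ≤ Real.exp (-3) then -(s ^ 2 * Real.log (s ^ 2))
  else 3 * s ^ 2 + 4 * Real.exp (-3) * s - Real.exp (-6)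

/-- The function `B = F + A` where `F(s) = s² log s²`. -/
noncomputable def Bfun (s : ℝ) : ℝ :=
  s ^ 2 * Real.log (s ^ 2) + Afun s

open Real Set

theorem abs_sub_le_of_abs_deriv_le_rpow {f f' : ℝ → ℝ} {K p : ℝ} (hp : 0 ≤ p)
    (hf : ∀ s, 0 ≤ s → HasDerivAt f (f' s) s) (hf' : ∀ s, 0 ≤ s → |f' s| ≤ K * s ^ p)
    {a b : ℝ} (ha : 0 ≤ a) (hb : 0 ≤ b) :
    |f a - f b| ≤ K * (a ^ p + b ^ p) * |a - b| := by
  have hK : 0 ≤ K := by simpa using (abs_nonneg _).trans (hf' 1 zero_le_one)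
  have hnonneg : ∀ s ∈ uIcc a b, 0 ≤ s := fun s hs => (le_min ha hb).trans hs.1
  have hbound : ∀ s ∈ uIcc a b, ‖f' s‖ ≤ K * (a ^ p + b ^ p) := by
    intro s hs
    have hmax : s ^ p ≤ max a b ^ p := rpow_le_rpow (hnonneg s hs) hs.2 hp
    have hsum : max a b ^ p ≤ a ^ p + b ^ p := by
      rcases max_choice a b with h | h <;> rw [h]
      · linarith [rpow_nonneg hb p]
      · linarith [rpow_nonneg ha p]
    calc ‖f' s‖ = |f' s| := rfl
      _ ≤ K * s ^ p := hf' s (hnonneg s hs)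
      _ ≤ K * (a ^ p + b ^ p) := mul_le_mul_of_nonneg_left (hmax.trans hsum) hK
  have := (convex_uIcc a b).norm_image_sub_le_of_norm_hasDerivWithin_le
    (fun s hs => (hf s (hnonneg s hs)).hasDerivWithinAt) hbound right_mem_uIcc left_mem_uIcc
  simpa only [Real.norm_eq_abs] using this

noncomputable def Bder (s : ℝ) : ℝ :=
  if s ≤ exp (-3) then 0 else 4 * s * log s + 8 * s + 4 * exp (-3)

lemma Bfun_of_le {s : ℝ} (hs : s ≤ exp (-3)) : Bfun s = 0 := by
  simp [Bfun, Afun, hs]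

lemma Bfun_of_ge {s : ℝ} (hs : exp (-3) ≤ s) :
    Bfun s = 2 * s ^ 2 * log s + 3 * s ^ 2 + 4 * exp (-3) * s - exp (-6) := by
  rcases hs.eq_or_lt with rfl | hlt
  · have : exp (-3) * exp (-3) = exp (-6) := by rw [← exp_add]; norm_num
    rw [Bfun_of_le le_rfl, log_exp]
    linear_combination -this
  · simp only [Bfun, Afun, not_le.mpr hlt, if_false, log_pow]
    ring

lemma hasDerivAt_Bfun_branch {t : ℝ} (ht : 0 < t) :
    HasDerivAt (fun u => 2 * u ^ 2 * log u + 3 * u ^ 2 + 4 * exp (-3) * u - exp (-6))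
      (4 * t * log t + 8 * t + 4 * exp (-3)) t := by
  have := ((((hasDerivAt_pow 2 t).const_mul 2).mul (hasDerivAt_log ht.ne')).add
    ((hasDerivAt_pow 2 t).const_mul 3)).add ((hasDerivAt_id t).const_mul (4 * exp (-3)))
  refine (this.sub_const (exp (-6))).congr_deriv ?_
  field_simp
  ring

lemma hasDerivAt_Bfun (s : ℝ) : HasDerivAt Bfun (Bder s) s := by
  rcases lt_trichotomy s (exp (-3)) with hlt | rfl | hgt
  · rw [Bder, if_pos hlt.le]
    refine (hasDerivAt_const s 0).congr_of_eventuallyEq ?_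
    filter_upwards [eventually_lt_nhds hlt] with t ht
    exact Bfun_of_le ht.le
  · rw [Bder, if_pos le_rfl]
    have hleft : HasDerivWithinAt Bfun 0 (Iic (exp (-3))) (exp (-3)) :=
      (hasDerivWithinAt_const _ _ 0).congr (fun t ht => Bfun_of_le ht) (Bfun_of_le le_rfl)
    have hright : HasDerivWithinAt Bfun 0 (Ici (exp (-3))) (exp (-3)) := by
      have h := (hasDerivAt_Bfun_branch (exp_pos (-3))).hasDerivWithinAt (s := Ici (exp (-3)))
      rw [log_exp, show 4 * exp (-3) * -3 + 8 * exp (-3) + 4 * exp (-3) = 0 by ring] at h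
      exact h.congr (fun t ht => Bfun_of_ge ht) (Bfun_of_ge le_rfl)
    simpa only [Iic_union_Ici, hasDerivWithinAt_univ] using hleft.union hright
  · rw [Bder, if_neg (not_le.mpr hgt)]
    refine (hasDerivAt_Bfun_branch ((exp_pos _).trans hgt)).congr_of_eventuallyEq ?_
    filter_upwards [eventually_gt_nhds hgt] with t ht
    exact Bfun_of_ge ht.le

lemma abs_Bder_le {ε : ℝ} (hε : 0 < ε) {s : ℝ} (hs : 0 ≤ s) :
    |Bder s| ≤ (24 * exp (3 * ε) + 4 / ε) * s ^ (1 + ε) := by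
  by_cases hle : s ≤ exp (-3)
  · rw [Bder, if_pos hle, abs_zero]
    positivity
  rw [Bder, if_neg hle]
  push Not at hle
  have hpos : 0 < s := (exp_pos _).trans hle
  have hsplit : s ^ (1 + ε) = s * s ^ ε := by rw [rpow_add hpos, rpow_one]
  have hlog : |log s| ≤ 3 + s ^ ε / ε := by
    have hlow : -3 ≤ log s := by simpa using log_le_log (exp_pos _) hle.le
    have := log_le_rpow_div hs hε
    rw [abs_le]; constructor <;> nlinarith [div_nonneg (rpow_nonneg hs ε) hε.le]
  have hlin : s ≤ exp (3 * ε) * s ^ (1 + ε) := by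
    have hpow : exp (-3 * ε) ≤ s ^ ε := by
      rw [exp_mul]; exact rpow_le_rpow (exp_pos _).le hle.le hε.le
    have hone : 1 ≤ exp (3 * ε) * s ^ ε :=
      calc (1 : ℝ) = exp (3 * ε) * exp (-3 * ε) := by rw [← exp_add]; ring_nf; exact exp_zero.symm
        _ ≤ exp (3 * ε) * s ^ ε := by gcongr
    rw [hsplit]; nlinarith
  calc |4 * s * log s + 8 * s + 4 * exp (-3)|
      ≤ |4 * s * log s| + |8 * s| + |4 * exp (-3)| := abs_add_three _ _ _
    _ = 4 * s * |log s| + 8 * s + 4 * exp (-3) := by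
        rw [abs_mul, abs_of_pos (by positivity : 0 < 4 * s), abs_of_pos (by positivity : 0 < 8 * s),
          abs_of_pos (by positivity : 0 < 4 * exp (-3))]
    _ ≤ 4 * s * (3 + s ^ ε / ε) + 8 * s + 4 * s := by gcongr
    _ = 24 * s + 4 / ε * s ^ (1 + ε) := by rw [hsplit]; ring
    _ ≤ (24 * exp (3 * ε) + 4 / ε) * s ^ (1 + ε) := by nlinarith

theorem B_local_lipschitz :
    ∀ ε : ℝ, 0 < ε → ∃ C : ℝ, 0 < C ∧
      ∀ z w : ℂ, |Bfun ‖z‖ - Bfun ‖w‖|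
        ≤ C * (‖z‖ ^ (1 + ε) + ‖w‖ ^ (1 + ε)) * ‖z - w‖ := by
  intro ε hε
  refine ⟨24 * exp (3 * ε) + 4 / ε, by positivity, fun z w => ?_⟩
  calc |Bfun ‖z‖ - Bfun ‖w‖|
      ≤ (24 * exp (3 * ε) + 4 / ε) * (‖z‖ ^ (1 + ε) + ‖w‖ ^ (1 + ε)) * |‖z‖ - ‖w‖| :=
        abs_sub_le_of_abs_deriv_le_rpow (by positivity) (fun s _ => hasDerivAt_Bfun s)
          (fun s hs => abs_Bder_le hε hs) (norm_nonneg z) (norm_nonneg w)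
    _ ≤ (24 * exp (3 * ε) + 4 / ε) * (‖z‖ ^ (1 + ε) + ‖w‖ ^ (1 + ε)) * ‖z - w‖ := by
        gcongr
        exact abs_norm_sub_norm_le z w
end

section
/- Growth bound on the regularized nonlinearity: there exists C > 0 such that for all m ∈ ℕ and z ∈ ℂ, |g_m(z)|² ≤ C(|z|^{2+1/N} + |z|^{2-1/N}), where g_m = b_m - a_m is the truncation defined via A and B. -/
open MeasureTheory

/-- The truncation `ã_m`. -/
noncomputable def atil (m : ℕ) (s : ℝ) : ℝ :=
  if 1 / (m : ℝ) ≤ s then Afun s / s ^ 2 else (m : ℝ) ^ 2 * Afun (1 / m)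

/-- The truncation `b̃_m`. -/
noncomputable def btil (m : ℕ) (s : ℝ) : ℝ :=
  if s ≤ (m : ℝ) then Bfun s / s ^ 2 else Bfun m / (m : ℝ) ^ 2

/-- The regularized nonlinearity `g_m = b_m - a_m`. -/
noncomputable def gm (m : ℕ) (z : ℂ) : ℂ :=
  z * (btil m ‖z‖ : ℝ) - z * (atil m ‖z‖ : ℝ)

lemma exp_neg6_eq : Real.exp (-6) = Real.exp (-3) * Real.exp (-3) := by
  rw [← Real.exp_add]; norm_num

lemma exp_neg3_lt_one : Real.exp (-3) < 1 := by
  have := Real.exp_lt_exp.mpr (show (-3:ℝ) < 0 by norm_num)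
  rwa [Real.exp_zero] at this

lemma afun_div_bound (s : ℝ) (hs : Real.exp (-3) < s) : |Afun s / s ^ 2| ≤ 7 := by
  have he3 : (0:ℝ) < Real.exp (-3) := Real.exp_pos _
  have hs0 : 0 < s := lt_trans he3 hs
  have hs2 : 0 < s ^ 2 := by positivity
  rw [Afun, if_neg (not_le.mpr hs)]
  rw [abs_le]
  constructor
  · rw [le_div_iff₀ hs2]
    nlinarith [exp_neg6_eq, mul_pos he3 hs0]
  · rw [div_le_iff₀ hs2]
    nlinarith [exp_neg6_eq, mul_pos he3 hs0]

lemma bfun_div (s : ℝ) (hs : 0 < s) :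
    Bfun s / s ^ 2 = Real.log (s ^ 2) + Afun s / s ^ 2 := by
  rw [Bfun, add_div, mul_div_cancel_left₀ _ (by positivity : (s:ℝ)^2 ≠ 0)]

lemma bfun_zero (s : ℝ) (h : s ≤ Real.exp (-3)) : Bfun s = 0 := by
  rw [Bfun, Afun, if_pos h]; ring

lemma log_sq_eq (s : ℝ) : Real.log (s ^ 2) = 2 * Real.log s := by
  rw [Real.log_pow]; push_cast; ring

lemma diff_bound (m : ℕ) (hm : 1 ≤ m) (s : ℝ) (hs : 0 < s) :
    |btil m s - atil m s| ≤ 4 * |Real.log s| + 16 := by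
  have hm1 : (1:ℝ) ≤ m := by exact_mod_cast hm
  have hm0 : (0:ℝ) < m := lt_of_lt_of_le one_pos hm1
  have he3 : (0:ℝ) < Real.exp (-3) := Real.exp_pos _
  have habs : 0 ≤ |Real.log s| := abs_nonneg _
  rw [btil, atil]
  by_cases h1 : s ≤ (m:ℝ)
  · rw [if_pos h1]
    by_cases h2 : 1/(m:ℝ) ≤ s
    · rw [if_pos h2]
      have hkey : Bfun s / s ^ 2 - Afun s / s ^ 2 = 2 * Real.log s := by
        rw [bfun_div s hs, log_sq_eq]; ring
      rw [hkey, abs_mul]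
      have := abs_two (α := ℝ)
      rw [abs_two]
      linarith
    · rw [if_neg h2]
      push_neg at h2
      have h1m : 1/(m:ℝ) ≤ 1 := by rw [div_le_one hm0]; exact hm1
      have hs1 : s < 1 := lt_of_lt_of_le h2 h1m
      have hB : |Bfun s / s ^ 2| ≤ 2 * |Real.log s| + 7 := by
        by_cases h3 : s ≤ Real.exp (-3)
        · rw [bfun_zero s h3, zero_div, abs_zero]; positivity
        · push_neg at h3
          rw [bfun_div s hs, log_sq_eq]
          calc |2 * Real.log s + Afun s / s ^ 2|
              ≤ |2 * Real.log s| + |Afun s / s ^ 2| := abs_add_le _ _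
            _ ≤ 2 * |Real.log s| + 7 := by
                rw [abs_mul, abs_two]
                linarith [afun_div_bound s h3]
      have hA : |(m:ℝ) ^ 2 * Afun (1/m)| ≤ 2 * |Real.log s| + 7 := by
        by_cases h4 : 1/(m:ℝ) ≤ Real.exp (-3)
        · rw [Afun, if_pos h4]
          have heq : (m:ℝ)^2 * -((1/(m:ℝ))^2 * Real.log ((1/(m:ℝ))^2))
              = -Real.log ((1/(m:ℝ))^2) := by
            field_simp
          rw [heq, log_sq_eq, abs_neg, abs_mul, abs_two]
          have hle : Real.log s ≤ Real.log (1/(m:ℝ)) := Real.log_le_log hs h2.le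
          have hneg : Real.log (1/(m:ℝ)) ≤ 0 := Real.log_nonpos (by positivity) h1m
          have habs2 : |Real.log (1/(m:ℝ))| ≤ |Real.log s| := by
            rw [abs_of_nonpos hneg, abs_of_nonpos (hle.trans hneg)]
            linarith
          linarith
        · push_neg at h4
          rw [Afun, if_neg (not_le.mpr h4)]
          have hme : (m:ℝ) * Real.exp (-3) < 1 := by
            rw [lt_div_iff₀ hm0] at h4; linarith
          have heq : (m:ℝ)^2 * (3*(1/(m:ℝ))^2 + 4*Real.exp (-3)*(1/(m:ℝ)) - Real.exp (-6))
              = 3 + 4*(Real.exp (-3)*(m:ℝ)) - Real.exp (-6)*(m:ℝ)^2 := by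
            field_simp
          rw [heq]
          rw [abs_le]
          constructor
          · nlinarith [exp_neg6_eq, mul_pos he3 hm0, sq_nonneg ((m:ℝ) * Real.exp (-3))]
          · nlinarith [exp_neg6_eq, mul_pos he3 hm0, sq_nonneg ((m:ℝ) * Real.exp (-3))]
      calc |Bfun s / s ^ 2 - (m:ℝ)^2 * Afun (1/m)|
          ≤ |Bfun s / s ^ 2| + |(m:ℝ)^2 * Afun (1/m)| := abs_sub _ _
        _ ≤ 4 * |Real.log s| + 16 := by linarith
  · push_neg at h1
    rw [if_neg (not_le.mpr h1)]
    have h2 : 1/(m:ℝ) ≤ s := by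
      have : 1/(m:ℝ) ≤ 1 := by rw [div_le_one hm0]; exact hm1
      linarith
    rw [if_pos h2]
    have hs1 : (1:ℝ) < s := lt_of_le_of_lt hm1 h1
    have hAs : |Afun s / s ^ 2| ≤ 7 :=
      afun_div_bound s (lt_trans exp_neg3_lt_one hs1)
    have hBm : |Bfun m / (m:ℝ)^2| ≤ 2 * |Real.log s| + 7 := by
      have hm3 : Real.exp (-3) < (m:ℝ) := lt_of_lt_of_le exp_neg3_lt_one hm1
      rw [bfun_div _ hm0, log_sq_eq]
      have hlogm0 : 0 ≤ Real.log (m:ℝ) := Real.log_nonneg hm1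
      have hlogle : Real.log (m:ℝ) ≤ |Real.log s| := by
        rw [abs_of_nonneg (Real.log_nonneg hs1.le)]
        exact Real.log_le_log hm0 h1.le
      calc |2 * Real.log (m:ℝ) + Afun (m:ℝ) / (m:ℝ)^2|
          ≤ |2 * Real.log (m:ℝ)| + |Afun (m:ℝ) / (m:ℝ)^2| := abs_add_le _ _
        _ ≤ 2 * |Real.log s| + 7 := by
            rw [abs_mul, abs_two, abs_of_nonneg hlogm0]
            linarith [afun_div_bound (m:ℝ) hm3]
    calc |Bfun (m:ℝ) / (m:ℝ)^2 - Afun s / s ^ 2|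
        ≤ |Bfun (m:ℝ) / (m:ℝ)^2| + |Afun s / s ^ 2| := abs_sub _ _
      _ ≤ 4 * |Real.log s| + 16 := by linarith

lemma logsq_bound (N : ℕ) (hN : 1 ≤ N) (x : ℝ) (hx : 0 < x) :
    (Real.log x) ^ 2 ≤ 4 * (N:ℝ)^2 * (x ^ (1/(N:ℝ)) + x ^ (-(1/(N:ℝ)))) := by
  have hN0 : (0:ℝ) < N := by exact_mod_cast hN
  have hNne : (N:ℝ) ≠ 0 := ne_of_gt hN0
  have key : ∀ y : ℝ, 1 ≤ y → (Real.log y) ^ 2 ≤ 4 * (N:ℝ)^2 * y ^ (1/(N:ℝ)) := by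
    intro y hy
    have hy0 : (0:ℝ) < y := lt_of_lt_of_le one_pos hy
    have h1 : Real.log y ≤ y ^ (1/(2*(N:ℝ))) / (1/(2*(N:ℝ))) :=
      Real.log_le_rpow_div hy0.le (by positivity)
    have h2 : y ^ (1/(2*(N:ℝ))) / (1/(2*(N:ℝ))) = 2*(N:ℝ) * y ^ (1/(2*(N:ℝ))) := by
      field_simp
    have hle : Real.log y ≤ 2*(N:ℝ) * y ^ (1/(2*(N:ℝ))) := h2 ▸ h1
    have h0 : 0 ≤ Real.log y := Real.log_nonneg hy
    have hsq : (y ^ (1/(2*(N:ℝ))))^2 = y ^ (1/(N:ℝ)) := by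
      rw [← Real.rpow_natCast (y ^ (1/(2*(N:ℝ)))) 2, ← Real.rpow_mul hy0.le]
      congr 1
      push_cast
      field_simp
    calc (Real.log y)^2 ≤ (2*(N:ℝ) * y ^ (1/(2*(N:ℝ))))^2 := pow_le_pow_left₀ h0 hle 2
      _ = 4*(N:ℝ)^2 * (y ^ (1/(2*(N:ℝ))))^2 := by ring
      _ = 4*(N:ℝ)^2 * y ^ (1/(N:ℝ)) := by rw [hsq]
  rcases le_or_gt 1 x with h | h
  · have h1 := key x h
    have h2 : 0 ≤ 4*(N:ℝ)^2 * x ^ (-(1/(N:ℝ))) := by positivity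
    nlinarith
  · have hx1 : (1:ℝ) ≤ x⁻¹ := one_le_inv_iff₀.mpr ⟨hx, h.le⟩
    have h1 := key x⁻¹ hx1
    have hrw : x⁻¹ ^ (1/(N:ℝ)) = x ^ (-(1/(N:ℝ))) := by
      rw [Real.rpow_neg hx.le, Real.inv_rpow hx.le]
    rw [Real.log_inv, hrw, neg_sq] at h1
    have h2 : 0 ≤ 4*(N:ℝ)^2 * x ^ (1/(N:ℝ)) := by positivity
    nlinarith

theorem gm_growth_bound (N : ℕ) (hN : 1 ≤ N) :
    ∃ C : ℝ, 0 < C ∧ ∀ m : ℕ, 1 ≤ m → ∀ z : ℂ,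
      ‖gm m z‖ ^ 2 ≤ C * (‖z‖ ^ (2 + 1 / (N : ℝ)) + ‖z‖ ^ (2 - 1 / (N : ℝ))) := by
  have hN0 : (0:ℝ) < N := by exact_mod_cast hN
  have hN1 : (1:ℝ) ≤ N := by exact_mod_cast hN
  refine ⟨128*(N:ℝ)^2 + 512, by positivity, ?_⟩
  intro m hm z
  by_cases hz : z = 0
  · subst hz
    have e1 : (‖(0:ℂ)‖ : ℝ) = 0 := norm_zero
    rw [e1]
    have h1 : (0:ℝ) ^ (2 + 1/(N:ℝ)) = 0 := Real.zero_rpow (by positivity)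
    have h2 : (0:ℝ) ^ (2 - 1/(N:ℝ)) = 0 := by
      apply Real.zero_rpow
      have : 1/(N:ℝ) ≤ 1 := by rw [div_le_one hN0]; exact hN1
      intro hcon; rw [sub_eq_zero] at hcon; linarith [hcon]
    rw [h1, h2]
    have : gm m 0 = 0 := by simp [gm]
    rw [this]
    simp
  · set s := ‖z‖ with hsdef
    have hs : 0 < s := norm_pos_iff.mpr hz
    have hgm : ‖gm m z‖ = s * |btil m s - atil m s| := by
      rw [gm, ← mul_sub, norm_mul, ← Complex.ofReal_sub, Complex.norm_real,
        Real.norm_eq_abs]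
    rw [hgm, mul_pow]
    set d := |btil m s - atil m s| with hd
    have hdb : d ≤ 4 * |Real.log s| + 16 := diff_bound m hm s hs
    have hd0 : 0 ≤ d := abs_nonneg _
    have hsq : d^2 ≤ 32*(Real.log s)^2 + 512 := by
      nlinarith [sq_nonneg (4*|Real.log s| - 16), sq_abs (Real.log s)]
    have ht : 0 < s ^ (1/(N:ℝ)) := Real.rpow_pos_of_pos hs _
    have hP1 : 1 ≤ s ^ (1/(N:ℝ)) + s ^ (-(1/(N:ℝ))) := by
      have hinv : s ^ (-(1/(N:ℝ))) = (s ^ (1/(N:ℝ)))⁻¹ := by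
        rw [Real.rpow_neg hs.le]
      rw [hinv]
      nlinarith [sq_nonneg (s^(1/(N:ℝ)) - 1), ht,
        mul_inv_cancel₀ (ne_of_gt ht)]
    have hlogb := logsq_bound N hN s hs
    have hdP : d^2 ≤ (128*(N:ℝ)^2 + 512) * (s ^ (1/(N:ℝ)) + s ^ (-(1/(N:ℝ)))) := by
      nlinarith
    have hrw1 : s ^ (2 + 1/(N:ℝ)) = s^2 * s ^ (1/(N:ℝ)) := by
      rw [Real.rpow_add hs]
      congr 1
      rw [show (2:ℝ) = ((2:ℕ):ℝ) by norm_num, Real.rpow_natCast]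
    have hrw2 : s ^ (2 - 1/(N:ℝ)) = s^2 * s ^ (-(1/(N:ℝ))) := by
      rw [show (2:ℝ) - 1/(N:ℝ) = 2 + (-(1/(N:ℝ))) by ring, Real.rpow_add hs]
      congr 1
      rw [show (2:ℝ) = ((2:ℕ):ℝ) by norm_num, Real.rpow_natCast]
    rw [hrw1, hrw2]
    calc s^2 * d^2
        ≤ s^2 * ((128*(N:ℝ)^2 + 512) * (s ^ (1/(N:ℝ)) + s ^ (-(1/(N:ℝ))))) :=
          mul_le_mul_of_nonneg_left hdP (sq_nonneg s)
      _ = (128*(N:ℝ)^2 + 512) * (s^2 * s ^ (1/(N:ℝ)) + s^2 * s ^ (-(1/(N:ℝ)))) := by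
          ring
end
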